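/- Let n ≥ 3 and let c : Fin n → Fin n → Fin n → Fin n → Fin n → Fin n → ℝ satisfy: (i) c i j k l m p = c j i k l m p = c i j l k m p = c i j k l p m; (ii) the cyclic identity c i j k l m p + c i j k m p l + c i j k p l m = 0; (iii) Lorentz invariance as a rank-6 tensor; (iv) c i j k l m p = 0 whenever i ≠ j. Then there exists B ∈ ℝ such that for all i, j and every w : Fin n → Fin n → Fin n → Fin n → ℝ with w k l m p = w l k m p = w k l p m: Σ_{k,l,m,p} c i j k l m p · w k l m p = B · Rform(w) · ε i · (if i = j then 1 else 0). -/

import Mathlib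

/-!
Reflections `x_v ↦ -x_v` are Lorentz transformations, so `c i i k l m p` vanishes as soon as some
value occurs an odd number of times among `k, l, m, p`; with the symmetries and the cyclic identity
only the entries `c i i a b a b`, `a ≠ b`, remain. Boosts in a plane spanned by the time axis and a
space axis, with `cosh = 5/3` and `sinh = 4/3` so that the resulting identities are linear with
rational coefficients, show that `ε i * ε a * ε b * c i i a b a b` is a single constant `q`.
Hence `c i j k l m p = q * ε i * δ i j * K k l m p` for the kernel `K` of `2 * Rform`.
-/

open Matrix

noncomputable section

namespace GeomActions

/-- Signature function: `ε 0 = −1`, `ε i = 1` for `i ≠ 0`. -/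
def eps (n : ℕ) (i : Fin n) : ℝ := if (i : ℕ) = 0 then -1 else 1

/-- The Minkowski form `η = diag(−1, 1, …, 1)` of signature `(1, n−1)`. -/
def etaMat (n : ℕ) : Matrix (Fin n) (Fin n) ℝ := Matrix.diagonal (eps n)

/-- The space of (components of) 2-jets of metrics: triples `(w₂, w₃, w₄)` encoding
`(g_{ij}, g_{ij,k}, g_{ij,kl})` at a point in a chart. -/
abbrev W (n : ℕ) :=
  (Fin n → Fin n → ℝ) × (Fin n → Fin n → Fin n → ℝ) × (Fin n → Fin n → Fin n → Fin n → ℝ)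

/-- An admissible parameter triple `(J, S, C)` for a coordinate change:
`J` invertible, `S` symmetric in its last two indices, `C` symmetric in its last three. -/
structure Admissible (n : ℕ) (J : Matrix (Fin n) (Fin n) ℝ)
    (S : Fin n → Fin n → Fin n → ℝ) (C : Fin n → Fin n → Fin n → Fin n → ℝ) : Prop where
  hJ : IsUnit J
  hS : ∀ a i k, S a i k = S a k i
  hC1 : ∀ a i k l, C a i k l = C a k i l
  hC2 : ∀ a i k l, C a i k l = C a i l k

/-- Transformation rule `Φ_{J,S,C}` for the 2-jet of a metric under a coordinate change. -/
def Phi (n : ℕ) (J : Matrix (Fin n) (Fin n) ℝ) (S : Fin n → Fin n → Fin n → ℝ)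
    (C : Fin n → Fin n → Fin n → Fin n → ℝ) (w : W n) : W n :=
  ⟨fun i j => ∑ a, ∑ b, J a i * J b j * w.1 a b,
   fun i j k =>
     (∑ a, ∑ b, ∑ c, J a i * J b j * J c k * w.2.1 a b c) +
       ∑ a, ∑ b, (S a i k * J b j + J a i * S b j k) * w.1 a b,
   fun i j k l =>
     (∑ a, ∑ b, ∑ c, ∑ d, J a i * J b j * J c k * J d l * w.2.2 a b c d) +
     (∑ a, ∑ b, ∑ c,
       (S a i l * J b j * J c k + J a i * S b j l * J c k + J a i * J b j * S c k l +
         J c l * S a i k * J b j + J c l * J a i * S b j k) * w.2.1 a b c) +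
     ∑ a, ∑ b,
       (S a i k * S b j l + S a i l * S b j k + C a i k l * J b j + J a i * C b j k l) * w.1 a b⟩

/-- `w ∈ W n` is a metric 2-jet: `w₂` symmetric and congruent to `η`, and `w₃`, `w₄`
have the symmetries of derivatives of a metric. -/
def MetricJet (n : ℕ) (w : W n) : Prop :=
  (∀ i j, w.1 i j = w.1 j i) ∧
  (∃ P : Matrix (Fin n) (Fin n) ℝ, IsUnit P ∧ Pᵀ * Matrix.of w.1 * P = etaMat n) ∧
  (∀ i j k, w.2.1 i j k = w.2.1 j i k) ∧
  (∀ i j k l, w.2.2 i j k l = w.2.2 j i k l ∧ w.2.2 i j k l = w.2.2 i j l k)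

/-- The symmetries `w i j k l = w j i k l = w i j l k` of the second-derivative variables. -/
def SymW4 (n : ℕ) (w : Fin n → Fin n → Fin n → Fin n → ℝ) : Prop :=
  ∀ i j k l, w i j k l = w j i k l ∧ w i j k l = w i j l k

/-- Symmetry under all permutations of the last three arguments. -/
def Sym3Last (n : ℕ) (c : Fin n → Fin n → Fin n → Fin n → ℝ) : Prop :=
  ∀ i j k l, c i j k l = c i k j l ∧ c i j k l = c i j l k

/-- The scalar curvature at a point, in Lorentz normal coordinates where
`g_{ij} = η i j`, `g_{ij,k} = 0`, `g_{ij,kl} = w4 i j k l`. -/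
def Rform (n : ℕ) (w4 : Fin n → Fin n → Fin n → Fin n → ℝ) : ℝ :=
  ∑ i, ∑ j, eps n i * eps n j * (w4 i j i j - w4 i i j j)

/-- The contravariant Ricci tensor at a point, in Lorentz normal coordinates. -/
def Ricform (n : ℕ) (w4 : Fin n → Fin n → Fin n → Fin n → ℝ) (i j : Fin n) : ℝ :=
  (1 / 2) * eps n i * eps n j *
    ∑ k, eps n k * (w4 i k j k + w4 j k i k - w4 i j k k - w4 k k i j)

/-- The space of 2-jets of a metric together with 1-jets `(D_I, D_{I,j})` of a
type-(0,m) tensor field. -/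
abbrev Y (n m : ℕ) :=
  W n × ((Fin m → Fin n) → ℝ) × ((Fin m → Fin n) → Fin n → ℝ)

/-- Transformation rule `Ψ_{J,S,C}` for the pair (metric 2-jet, matter field 1-jet). -/
def Psi (n m : ℕ) (J : Matrix (Fin n) (Fin n) ℝ) (S : Fin n → Fin n → Fin n → ℝ)
    (C : Fin n → Fin n → Fin n → Fin n → ℝ) (p : Y n m) : Y n m :=
  ⟨Phi n J S C p.1,
   fun I => ∑ A : Fin m → Fin n, (∏ r, J (A r) (I r)) * p.2.1 A,
   fun I j =>
     (∑ A : Fin m → Fin n, ∑ b, (∏ r, J (A r) (I r)) * J b j * p.2.2 A b) +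
     ∑ r : Fin m, ∑ A : Fin m → Fin n,
       S (A r) (I r) j * (∏ s ∈ Finset.univ.erase r, J (A s) (I s)) * p.2.1 A⟩

/-- The full antisymmetrisation `Alt y′` of the rank-(m+1) tensor
`z I = y′ (I ∘ castSucc) (I (last m))` determined by the derivative variables `y′`. -/
def altD (n m : ℕ) (y' : (Fin m → Fin n) → Fin n → ℝ) (I : Fin (m + 1) → Fin n) : ℝ :=
  (1 / (Nat.factorial (m + 1) : ℝ)) *
    ∑ σ : Equiv.Perm (Fin (m + 1)),
      ((Equiv.Perm.sign σ : ℤ) : ℝ) *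
        y' (fun r => I (σ (Fin.castSucc r))) (I (σ (Fin.last m)))

/-- Lorentz matrices: `Aᵀ * η * A = η`. -/
def IsLorentz (n : ℕ) (A : Matrix (Fin n) (Fin n) ℝ) : Prop :=
  Aᵀ * etaMat n * A = etaMat n

/-- Lorentz invariance of a rank-2 tensor. -/
def LorentzInv2 (n : ℕ) (b : Fin n → Fin n → ℝ) : Prop :=
  ∀ A : Matrix (Fin n) (Fin n) ℝ, IsLorentz n A →
    ∀ i j, b i j = ∑ p, ∑ q, A i p * A j q * b p q

/-- Lorentz invariance of a rank-4 tensor. -/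
def LorentzInv4 (n : ℕ) (a : Fin n → Fin n → Fin n → Fin n → ℝ) : Prop :=
  ∀ A : Matrix (Fin n) (Fin n) ℝ, IsLorentz n A →
    ∀ i j k l, a i j k l = ∑ p, ∑ q, ∑ r, ∑ s, A i p * A j q * A k r * A l s * a p q r s

/-- Lorentz invariance of a rank-6 tensor. -/
def LorentzInv6 (n : ℕ) (a : Fin n → Fin n → Fin n → Fin n → Fin n → Fin n → ℝ) : Prop :=
  ∀ A : Matrix (Fin n) (Fin n) ℝ, IsLorentz n A →
    ∀ i j k l m p, a i j k l m p =
      ∑ a₁, ∑ a₂, ∑ a₃, ∑ a₄, ∑ a₅, ∑ a₆,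
        A i a₁ * A j a₂ * A k a₃ * A l a₄ * A m a₅ * A p a₆ * a a₁ a₂ a₃ a₄ a₅ a₆

/-- Lorentz invariance of a rank-k tensor indexed by `Fin k → Fin n`. -/
def LorentzInvT (n k : ℕ) (T : (Fin k → Fin n) → ℝ) : Prop :=
  ∀ A : Matrix (Fin n) (Fin n) ℝ, IsLorentz n A →
    ∀ I : Fin k → Fin n, T I = ∑ J : Fin k → Fin n, (∏ r, A (I r) (J r)) * T J

/-- Number of occurrences of `v` among `(i, j, k, l)`. -/
def cnt4 (n : ℕ) (i j k l v : Fin n) : ℕ :=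
  (if i = v then 1 else 0) + (if j = v then 1 else 0) + (if k = v then 1 else 0) +
    (if l = v then 1 else 0)

/-- Coordinate direction in the `w₂`-variables. -/
def e2 (n : ℕ) (i j : Fin n) : W n :=
  ⟨fun a b => if a = i ∧ b = j then 1 else 0, 0, 0⟩

/-- Coordinate direction in the `w₃`-variables. -/
def e3 (n : ℕ) (i j k : Fin n) : W n :=
  ⟨0, fun a b c => if a = i ∧ b = j ∧ c = k then 1 else 0, 0⟩

/-- Coordinate direction in the `w₄`-variables. -/
def e4 (n : ℕ) (i j k l : Fin n) : W n :=
  ⟨0, 0, fun a b c d => if a = i ∧ b = j ∧ c = k ∧ d = l then 1 else 0⟩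

/-- Coordinate direction in the `y′`-variables. -/
def eY' (n m : ℕ) (I : Fin m → Fin n) (j : Fin n) : Y n m :=
  ⟨0, 0, fun A b => if A = I ∧ b = j then 1 else 0⟩

section LorentzMatrices

variable {n : ℕ}

lemma isLorentz_diagonal {s : Fin n → ℝ} (hs : ∀ w, s w * s w = 1) :
    IsLorentz n (diagonal s) := by
  rw [IsLorentz, etaMat, diagonal_transpose, diagonal_mul_diagonal, diagonal_mul_diagonal]
  congr 1
  funext w
  linear_combination eps n w * hs w

def boost (z x : Fin n) (ch sh : ℝ) : Matrix (Fin n) (Fin n) ℝ :=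
  Matrix.of fun w a =>
    if w = z then (if a = z then ch else 0) + (if a = x then sh else 0)
    else if w = x then (if a = z then sh else 0) + (if a = x then ch else 0)
    else if a = w then 1 else 0

variable {z x : Fin n} {ch sh : ℝ}

lemma boost_apply_comm (w a : Fin n) : boost z x ch sh w a = boost z x ch sh a w := by
  unfold boost
  by_cases hwz : w = z <;> by_cases hwx : w = x <;> by_cases haz : a = z <;>
    by_cases hax : a = x <;> simp_all [eq_comm]

lemma sum_boost_mul (w : Fin n) (g : Fin n → ℝ) :
    ∑ a, boost z x ch sh w a * g a =
      if w = z then ch * g z + sh * g x else if w = x then sh * g z + ch * g x else g w := by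
  by_cases hwz : w = z <;> by_cases hwx : w = x <;>
    simp [boost, hwz, hwx, add_mul, Finset.sum_add_distrib, ite_mul]

lemma isLorentz_boost (hz : eps n z = -1) (hx : eps n x = 1) (hzx : z ≠ x)
    (hch : ch * ch - sh * sh = 1) : IsLorentz n (boost z x ch sh) := by
  unfold IsLorentz
  ext a b
  rw [mul_apply]
  simp only [etaMat, mul_diagonal, transpose_apply, diagonal_apply]
  simp_rw [mul_assoc, boost_apply_comm _ a, sum_boost_mul]
  have trichotomy (v : Fin n) : v = z ∨ v = x ∨ (v ≠ z ∧ v ≠ x) := by tauto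
  obtain rfl | rfl | ⟨haz, hax⟩ := trichotomy a <;>
  obtain rfl | rfl | ⟨hbz, hbx⟩ := trichotomy b <;>
  simp [boost, hzx.symm, *] <;> grind

lemma eps_eq_neg_one_of_val_eq_zero {v : Fin n} (hv : (v : ℕ) = 0) : eps n v = -1 := if_pos hv

lemma eps_eq_one_of_ne {z v : Fin n} (hz : (z : ℕ) = 0) (hv : v ≠ z) : eps n v = 1 :=
  if_neg fun h => hv (Fin.ext (h.trans hz.symm))

end LorentzMatrices

section InvariantTensors

variable {n : ℕ} {c : Fin n → Fin n → Fin n → Fin n → Fin n → Fin n → ℝ}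

lemma LorentzInv6.eq_iterated_sum (hlor : LorentzInv6 n c) {A : Matrix (Fin n) (Fin n) ℝ}
    (hA : IsLorentz n A) (i j k l m p : Fin n) :
    c i j k l m p = ∑ a₁, A i a₁ * ∑ a₂, A j a₂ * ∑ a₃, A k a₃ * ∑ a₄, A l a₄ *
      ∑ a₅, A m a₅ * ∑ a₆, A p a₆ * c a₁ a₂ a₃ a₄ a₅ a₆ := by
  simp only [hlor A hA i j k l m p, Finset.mul_sum, mul_assoc]

lemma LorentzInv6.apply_eq_zero_of_odd (hlor : LorentzInv6 n c) {k l m p v : Fin n}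
    (hv : Odd (cnt4 n k l m p v)) (i : Fin n) : c i i k l m p = 0 := by
  set s : Fin n → ℝ := fun w => if w = v then -1 else 1
  have hs : ∀ w, s w * s w = 1 := fun w => by by_cases h : w = v <;> simp [s, h]
  have hodd : s k * s l * s m * s p = -1 := by
    simp only [cnt4] at hv
    by_cases hk : k = v <;> by_cases hl : l = v <;> by_cases hm : m = v <;> by_cases hp : p = v <;>
      simp_all [s] <;> contradiction
  have e := hlor.eq_iterated_sum (isLorentz_diagonal hs) i i k l m p
  simp only [diagonal_apply, ite_mul, zero_mul, Finset.sum_ite_eq, Finset.mem_univ, if_true] at e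
  linear_combination (1 / 2) * e + (1 / 2) * (s k * s l * s m * s p * c i i k l m p) * hs i +
    (1 / 2) * c i i k l m p * hodd

-- The odd-count witness is one of the four slots, so that `simp` can discharge the hypothesis.
lemma LorentzInv6.apply_eq_zero_of_unique (hlor : LorentzInv6 n c) {k l m p : Fin n}
    (h : cnt4 n k l m p k = 1 ∨ cnt4 n k l m p l = 1 ∨ cnt4 n k l m p m = 1 ∨
      cnt4 n k l m p p = 1) (i : Fin n) : c i i k l m p = 0 := by
  obtain h | h | h | h := h <;> exact hlor.apply_eq_zero_of_odd (h ▸ odd_one) i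

lemma apply_aaaa_eq_zero
    (hcyc : ∀ i j k l m p, c i j k l m p + c i j k m p l + c i j k p l m = 0) (i j a : Fin n) :
    c i j a a a a = 0 := by
  linarith [hcyc i j a a a a]

lemma apply_aabb_eq (hsym : ∀ i j k l m p, c i j k l m p = c j i k l m p ∧
      c i j k l m p = c i j l k m p ∧ c i j k l m p = c i j k l p m)
    (hcyc : ∀ i j k l m p, c i j k l m p + c i j k m p l + c i j k p l m = 0) (i j a b : Fin n) :
    c i j a a b b = -2 * c i j a b a b := by
  linarith [hcyc i j a b a b, (hsym i j a b b a).2.2]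

def signedEntry (c : Fin n → Fin n → Fin n → Fin n → Fin n → Fin n → ℝ) (i a b : Fin n) : ℝ :=
  eps n i * eps n a * eps n b * c i i a b a b

lemma signedEntry_comm
    (hsym : ∀ i j k l m p, c i j k l m p = c j i k l m p ∧
      c i j k l m p = c i j l k m p ∧ c i j k l m p = c i j k l p m) (i a b : Fin n) :
    signedEntry c i a b = signedEntry c i b a := by
  rw [signedEntry, signedEntry, (hsym i i b a b a).2.1, ← (hsym i i a b a b).2.2]
  ring

variable {z x : Fin n}

lemma signedEntry_boost_transverse (hlor : LorentzInv6 n c)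
    (hoffdiag : ∀ i j k l m p, i ≠ j → c i j k l m p = 0)
    (hz : eps n z = -1) (hx : eps n x = 1) (hzx : z ≠ x) {y y' : Fin n}
    (hyz : y ≠ z) (hyx : y ≠ x) (hy'z : y' ≠ z) (hy'x : y' ≠ x) :
    signedEntry c x y y' = signedEntry c z y y' := by
  have e := hlor.eq_iterated_sum (isLorentz_boost hz hx hzx (ch := 5 / 3) (sh := 4 / 3)
    (by norm_num)) x x y y' y y'
  simp only [sum_boost_mul, if_neg hzx.symm, if_neg hyz, if_neg hyx, if_neg hy'z, if_neg hy'x,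
    if_true, hoffdiag z x _ _ _ _ hzx, hoffdiag x z _ _ _ _ hzx.symm] at e
  have h : c x x y y' y y' = -c z z y y' y y' := by linarith
  rw [signedEntry, signedEntry, h, hz, hx]
  ring

lemma signedEntry_boost_half_transverse (hlor : LorentzInv6 n c)
    (hsym : ∀ i j k l m p, c i j k l m p = c j i k l m p ∧
      c i j k l m p = c i j l k m p ∧ c i j k l m p = c i j k l p m)
    (hcyc : ∀ i j k l m p, c i j k l m p + c i j k m p l + c i j k p l m = 0)
    (hoffdiag : ∀ i j k l m p, i ≠ j → c i j k l m p = 0)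
    (hz : eps n z = -1) (hx : eps n x = 1) (hzx : z ≠ x) {y : Fin n} (hyz : y ≠ z) (hyx : y ≠ x) :
    signedEntry c z x y = signedEntry c z z y ∧ signedEntry c x z y = signedEntry c z x y ∧
      signedEntry c x x y = signedEntry c z x y := by
  have hB := isLorentz_boost hz hx hzx (ch := 5 / 3) (sh := 4 / 3) (by norm_num)
  have e₁ := hlor.eq_iterated_sum hB z x z x y y
  have e₂ := hlor.eq_iterated_sum hB z z x y x y
  have e₃ := hlor.eq_iterated_sum hB z z z y z y
  simp [sum_boost_mul, hzx, hzx.symm, hyz, hyx, hoffdiag z x _ _ _ _ hzx,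
    hoffdiag x z _ _ _ _ hzx.symm, apply_aabb_eq hsym hcyc, hlor.apply_eq_zero_of_unique, cnt4]
    at e₁ e₂ e₃
  have h₁ : c z z x y x y = -c z z z y z y := by linarith
  have h₂ : c x x z y z y = c z z x y x y := by linarith
  have h₃ : c x x x y x y = -c z z x y x y := by linarith
  simp only [signedEntry, hz, hx, h₃, h₂, h₁]
  exact ⟨by ring, by ring, by ring⟩

lemma signedEntry_boost_in_plane (hlor : LorentzInv6 n c)
    (hsym : ∀ i j k l m p, c i j k l m p = c j i k l m p ∧
      c i j k l m p = c i j l k m p ∧ c i j k l m p = c i j k l p m)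
    (hcyc : ∀ i j k l m p, c i j k l m p + c i j k m p l + c i j k p l m = 0)
    (hoffdiag : ∀ i j k l m p, i ≠ j → c i j k l m p = 0)
    (hz : eps n z = -1) (hx : eps n x = 1) (hzx : z ≠ x) :
    signedEntry c x z x = signedEntry c z z x := by
  have hB := isLorentz_boost hz hx hzx (ch := 5 / 3) (sh := 4 / 3) (by norm_num)
  have e := hlor.eq_iterated_sum hB x x z x z x
  have hxzxz : ∀ i, c i i x z x z = c i i z x z x := fun i =>
    (hsym i i x z x z).2.1.trans (hsym i i z x x z).2.2
  have hzxxz : ∀ i, c i i z x x z = c i i z x z x := fun i => (hsym i i z x x z).2.2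
  have hxzzx : ∀ i, c i i x z z x = c i i z x z x := fun i => (hsym i i x z z x).2.1
  have hzzxx : ∀ i, c i i z z x x = -2 * c i i z x z x := fun i => apply_aabb_eq hsym hcyc i i z x
  have hxxzz : ∀ i, c i i x x z z = -2 * c i i z x z x := fun i => by
    rw [apply_aabb_eq hsym hcyc, hxzxz]
  simp [sum_boost_mul, hzx, hzx.symm, hoffdiag z x _ _ _ _ hzx,
    hoffdiag x z _ _ _ _ hzx.symm, apply_aaaa_eq_zero hcyc,
    hlor.apply_eq_zero_of_unique, cnt4, hxzxz, hzxxz, hxzzx, hzzxx, hxxzz] at e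
  have h : c x x z x z x = -c z z z x z x := by linarith
  rw [signedEntry, signedEntry, h, hz, hx]
  ring

lemma signedEntry_time_eq (hlor : LorentzInv6 n c)
    (hsym : ∀ i j k l m p, c i j k l m p = c j i k l m p ∧
      c i j k l m p = c i j l k m p ∧ c i j k l m p = c i j k l p m)
    (hcyc : ∀ i j k l m p, c i j k l m p + c i j k m p l + c i j k p l m = 0)
    (hoffdiag : ∀ i j k l m p, i ≠ j → c i j k l m p = 0)
    {z o : Fin n} (hz : (z : ℕ) = 0) (hoz : o ≠ z) {a b : Fin n} (hab : a ≠ b) :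
    signedEntry c z a b = signedEntry c z z o := by
  have hεz := eps_eq_neg_one_of_val_eq_zero hz
  have timelike {x y : Fin n} (hxz : x ≠ z) (hyz : y ≠ z) (hyx : y ≠ x) :=
    (signedEntry_boost_half_transverse hlor hsym hcyc hoffdiag hεz (eps_eq_one_of_ne hz hxz)
      hxz.symm hyz hyx).1
  have time_row {b : Fin n} (hbz : b ≠ z) : signedEntry c z z b = signedEntry c z z o := by
    by_cases hbo : b = o
    · rw [hbo]
    · rw [← timelike hoz hbz hbo, signedEntry_comm hsym, timelike hbz hoz (Ne.symm hbo)]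
  by_cases haz : a = z
  · exact haz ▸ time_row (haz ▸ hab.symm)
  by_cases hbz : b = z
  · rw [signedEntry_comm hsym, hbz, time_row haz]
  · rw [timelike haz hbz hab.symm, time_row hbz]

lemma signedEntry_eq_of_ne (hlor : LorentzInv6 n c)
    (hsym : ∀ i j k l m p, c i j k l m p = c j i k l m p ∧
      c i j k l m p = c i j l k m p ∧ c i j k l m p = c i j k l p m)
    (hcyc : ∀ i j k l m p, c i j k l m p + c i j k m p l + c i j k p l m = 0)
    (hoffdiag : ∀ i j k l m p, i ≠ j → c i j k l m p = 0)
    {z o : Fin n} (hz : (z : ℕ) = 0) (hoz : o ≠ z) {i a b : Fin n} (hab : a ≠ b) :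
    signedEntry c i a b = signedEntry c z z o := by
  have time_eq {a b : Fin n} (hab : a ≠ b) :=
    signedEntry_time_eq hlor hsym hcyc hoffdiag hz hoz hab
  by_cases hiz : i = z
  · exact hiz ▸ time_eq hab
  have hεz := eps_eq_neg_one_of_val_eq_zero hz
  have hεi := eps_eq_one_of_ne hz hiz
  have timelike {y : Fin n} (hyz : y ≠ z) (hyi : y ≠ i) :=
    signedEntry_boost_half_transverse hlor hsym hcyc hoffdiag hεz hεi (Ne.symm hiz) hyz hyi
  have off_plane {a b : Fin n} (hab : a ≠ b) (hbz : b ≠ z) (hbi : b ≠ i) :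
      signedEntry c i a b = signedEntry c z z o := by
    by_cases haz : a = z
    · rw [haz, (timelike hbz hbi).2.1, time_eq (Ne.symm hbi)]
    by_cases hai : a = i
    · rw [hai, (timelike hbz hbi).2.2, time_eq (Ne.symm hbi)]
    · rw [signedEntry_boost_transverse hlor hoffdiag hεz hεi (Ne.symm hiz) haz hai hbz hbi,
        time_eq hab]
  by_cases hb : b ≠ z ∧ b ≠ i
  · exact off_plane hab hb.1 hb.2
  by_cases ha : a ≠ z ∧ a ≠ i
  · rw [signedEntry_comm hsym]; exact off_plane hab.symm ha.1 ha.2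
  have hzi : signedEntry c i z i = signedEntry c z z o := by
    rw [signedEntry_boost_in_plane hlor hsym hcyc hoffdiag hεz hεi (Ne.symm hiz),
      time_eq (Ne.symm hiz)]
  obtain ⟨rfl, rfl⟩ | ⟨rfl, rfl⟩ : (a = z ∧ b = i) ∨ (a = i ∧ b = z) := by grind
  · exact hzi
  · rw [signedEntry_comm hsym]; exact hzi

def rformKernel (n : ℕ) (k l m p : Fin n) : ℝ :=
  (if k = m ∧ l = p then eps n k * eps n l else 0) +
    (if k = p ∧ l = m then eps n k * eps n l else 0) -
    2 * (if k = l ∧ m = p then eps n k * eps n m else 0)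

lemma sum_rformKernel_mul {w : Fin n → Fin n → Fin n → Fin n → ℝ} (hw : SymW4 n w) :
    ∑ k, ∑ l, ∑ m, ∑ p, rformKernel n k l m p * w k l m p = 2 * Rform n w := by
  have hswap : ∀ k l, w k l l k = w k l k l := fun k l => ((hw k l k l).2).symm
  simp only [rformKernel, sub_mul, add_mul, ite_mul, zero_mul, mul_assoc, ite_and,
    Finset.sum_add_distrib, Finset.sum_sub_distrib, Finset.sum_ite_irrel, Finset.sum_const_zero,
    Finset.sum_ite_eq, Finset.mem_univ, if_true, ← Finset.mul_sum, hswap, Rform, mul_sub]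
  ring

lemma cnt4_eq_one_of_not_paired {k l m p : Fin n} (h₁ : ¬(k = m ∧ l = p)) (h₂ : ¬(k = p ∧ l = m))
    (h₃ : ¬(k = l ∧ m = p)) :
    cnt4 n k l m p k = 1 ∨ cnt4 n k l m p l = 1 ∨ cnt4 n k l m p m = 1 ∨ cnt4 n k l m p p = 1 := by
  simp only [cnt4]
  grind

lemma apply_eq_mul_rformKernel (hlor : LorentzInv6 n c)
    (hsym : ∀ i j k l m p, c i j k l m p = c j i k l m p ∧
      c i j k l m p = c i j l k m p ∧ c i j k l m p = c i j k l p m)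
    (hcyc : ∀ i j k l m p, c i j k l m p + c i j k m p l + c i j k p l m = 0) {q : ℝ}
    (hq : ∀ i a b, a ≠ b → signedEntry c i a b = q) (i k l m p : Fin n) :
    c i i k l m p = q * eps n i * rformKernel n k l m p := by
  have habab {a b : Fin n} (hab : a ≠ b) : c i i a b a b = q * eps n i * (eps n a * eps n b) := by
    rw [← hq i a b hab, signedEntry]
    simp only [eps]
    split_ifs <;> ring
  by_cases h₁ : k = m ∧ l = p
  · obtain ⟨rfl, rfl⟩ := h₁
    by_cases hkl : k = l
    · subst hkl
      rw [apply_aaaa_eq_zero hcyc]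
      simp only [rformKernel, and_self, if_true]
      ring
    · simp [rformKernel, habab hkl, hkl]
  by_cases h₂ : k = p ∧ l = m
  · obtain ⟨rfl, rfl⟩ := h₂
    have hkl : k ≠ l := fun h => h₁ ⟨h, h.symm⟩
    simp [rformKernel, ← (hsym i i k l k l).2.2, habab hkl, hkl]
  by_cases h₃ : k = l ∧ m = p
  · obtain ⟨rfl, rfl⟩ := h₃
    have hkm : k ≠ m := fun h => h₁ ⟨h, h⟩
    simp [rformKernel, apply_aabb_eq hsym hcyc, habab hkm, hkm]
    ring
  · simp [rformKernel, hlor.apply_eq_zero_of_unique (cnt4_eq_one_of_not_paired h₁ h₂ h₃), h₁, h₂, h₃]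

end InvariantTensors

theorem statement14 (n : ℕ) (hn : 3 ≤ n)
    (c : Fin n → Fin n → Fin n → Fin n → Fin n → Fin n → ℝ)
    (hsym : ∀ i j k l m p, c i j k l m p = c j i k l m p ∧
      c i j k l m p = c i j l k m p ∧ c i j k l m p = c i j k l p m)
    (hcyc : ∀ i j k l m p, c i j k l m p + c i j k m p l + c i j k p l m = 0)
    (hlor : LorentzInv6 n c)
    (hoffdiag : ∀ i j k l m p, i ≠ j → c i j k l m p = 0) :
    ∃ B : ℝ, ∀ i j : Fin n, ∀ w : Fin n → Fin n → Fin n → Fin n → ℝ, SymW4 n w →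
      (∑ k, ∑ l, ∑ m, ∑ p, c i j k l m p * w k l m p) =
        B * Rform n w * eps n i * (if i = j then 1 else 0) := by
  let z : Fin n := ⟨0, by omega⟩
  let o : Fin n := ⟨1, by omega⟩
  have hq (i a b : Fin n) (hab : a ≠ b) : signedEntry c i a b = signedEntry c z z o :=
    signedEntry_eq_of_ne hlor hsym hcyc hoffdiag rfl (by simp [z, o, Fin.ext_iff]) hab
  refine ⟨2 * signedEntry c z z o, fun i j w hw => ?_⟩
  by_cases hij : i = j
  · subst hij
    simp only [apply_eq_mul_rformKernel hlor hsym hcyc hq, mul_assoc, ← Finset.mul_sum,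
      sum_rformKernel_mul hw, if_true]
    ring
  · simp [hoffdiag i j _ _ _ _ hij, hij]

end GeomActions
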